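/- Let f(z) = z + β + ∫_ℝ (1+tz)/(t−z) dμ(t) on the upper half-plane H, where μ is a symmetric finite positive Borel measure with ∫_ℝ |t| dμ(t) = ∞ and β ≠ 0. Define p₂(z) = ∫_{(0,+∞)} 2(1+t²)(t²+|z|²)/|t²−z²|² dμ(t) for z ∈ H. Then for every z₀ ∈ H, liminf_{n→∞} (|x_n|/y_n)·p₂(z_n) = 0, where z_n = f^n(z₀), x_n = Re z_n, y_n = Im z_n. -/

import Mathlib

/-!
Write `z_n = x_n + i y_n` and `P(z) = ∫ (1 + t²) / |t - z|² dμ(t)`. Then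
`y_{n+1} = y_n (1 + P(z_n))`, and pairing `t` with `-t` under the symmetric measure gives
`|x_{n+1}| ≤ |x_n| (1 + P(z_n)) + |β|`; also `p₂ ≤ P`. If `(|x_n| / y_n) p₂(z_n) ≥ ε` for all `n`,
then `P(z_n) ≥ ε y_n / |x_n|`, which makes `(|x_n| / y_n) exp(|β| / (ε y_n))` nonincreasing. So the
slopes `|x_n| / y_n` stay below some `M`, hence `P(z_n) ≥ ε / M` and `y_n → ∞` geometrically.
Bounded slopes and `y_n → ∞` give `p₂(z_n) → 0` by dominated convergence, a contradiction.
-/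

open MeasureTheory Filter Complex Topology

/-- The parabolic self-map of the upper half-plane associated to `β` and `μ`:
`f(z) = z + β + ∫ (1+tz)/(t−z) dμ(t)`. -/
noncomputable def fmap (β : ℝ) (μ : Measure ℝ) (z : ℂ) : ℂ :=
  z + (β : ℂ) + ∫ t : ℝ, (1 + (t : ℂ) * z) / ((t : ℂ) - z) ∂μ

/-- The pseudo-hyperbolic distance on the upper half-plane:
`ρ(z,w) = |z−w|/|z−conj w|`. -/
noncomputable def pseudoHyp (z w : ℂ) : ℝ :=
  ‖z - w‖ / ‖z - (starRingEnd ℂ) w‖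

/-- `f` is of zero hyperbolic step: there exists `z` in the upper half-plane with
`ρ(f^[n+1] z, f^[n] z) → 0`. -/
def ZeroHS (f : ℂ → ℂ) : Prop :=
  ∃ z : ℂ, 0 < z.im ∧
    Tendsto (fun n : ℕ => pseudoHyp (f^[n + 1] z) (f^[n] z)) atTop (𝓝 0)
/-- `p₂(z) = ∫_{(0,+∞)} 2(1+t²)(t²+|z|²)/|t²−z²|² dμ(t)`. -/
noncomputable def ptwo (μ : Measure ℝ) (z : ℂ) : ℝ :=
  ∫ t in Set.Ioi (0 : ℝ),
    2 * (1 + t ^ 2) * (t ^ 2 + ‖z‖ ^ 2) /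
      ‖(t : ℂ) ^ 2 - z ^ 2‖ ^ 2 ∂μ

noncomputable def nevKernel (z : ℂ) (t : ℝ) : ℂ := (1 + (t : ℂ) * z) / ((t : ℂ) - z)

noncomputable def nevWeight (z : ℂ) (t : ℝ) : ℝ := (1 + t ^ 2) / ((t - z.re) ^ 2 + z.im ^ 2)

noncomputable def nevMass (μ : Measure ℝ) (z : ℂ) : ℝ := ∫ t, nevWeight z t ∂μ

lemma normSq_ofReal_sub (z : ℂ) (t : ℝ) : normSq ((t : ℂ) - z) = (t - z.re) ^ 2 + z.im ^ 2 := by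
  simp only [normSq_apply, sub_re, ofReal_re, sub_im, ofReal_im, zero_sub, mul_neg, neg_mul,
    neg_neg]
  ring

lemma nevWeight_nonneg (z : ℂ) (t : ℝ) : 0 ≤ nevWeight z t := by
  unfold nevWeight; positivity

section Kernel

variable {z : ℂ} (t : ℝ) (hz : 0 < z.im)
include hz

lemma ofReal_sub_ne_zero : (t : ℂ) - z ≠ 0 := fun h => by
  simpa [hz.ne'] using congrArg Complex.im h

lemma continuous_nevWeight : Continuous (nevWeight z) :=
  Continuous.div (by fun_prop) (by fun_prop) fun t => by positivity

lemma continuous_nevKernel : Continuous (nevKernel z) :=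
  Continuous.div (by fun_prop) (by fun_prop) fun t => ofReal_sub_ne_zero t hz

lemma nevWeight_le : nevWeight z t ≤ 2 + 1 / z.im ^ 2 + 2 * (|z.re| / z.im) ^ 2 := by
  have hsq : t ^ 2 ≤ 2 * (t - z.re) ^ 2 + 2 * z.re ^ 2 := by nlinarith [sq_nonneg (t - 2 * z.re)]
  rw [nevWeight, div_le_iff₀ (by positivity), div_pow, sq_abs]
  have hy : (0 : ℝ) < z.im ^ 2 := by positivity
  have : (1 / z.im ^ 2 + 2 * (z.re ^ 2 / z.im ^ 2)) * ((t - z.re) ^ 2 + z.im ^ 2)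
      ≥ 1 + 2 * z.re ^ 2 := by
    rw [ge_iff_le, ← sub_nonneg]
    field_simp
    nlinarith [sq_nonneg (t - z.re), mul_nonneg (sq_nonneg (t - z.re)) (sq_nonneg z.re)]
  nlinarith [sq_nonneg (t - z.re)]

lemma nevWeight_le_div_sq : nevWeight z t ≤ (1 + t ^ 2) / z.im ^ 2 :=
  div_le_div_of_nonneg_left (by positivity) (by positivity) (by nlinarith [sq_nonneg (t - z.re)])

lemma nevKernel_eq :
    nevKernel z t =
      ((((1 + t * z.re) * (t - z.re) - t * z.im ^ 2) / ((t - z.re) ^ 2 + z.im ^ 2) : ℝ) : ℂ)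
        + ((z.im * nevWeight z t : ℝ) : ℂ) * I := by
  have hD : (t - z.re) ^ 2 + z.im ^ 2 ≠ 0 := by positivity
  rw [nevKernel, nevWeight, div_eq_iff (ofReal_sub_ne_zero t hz), Complex.ext_iff]
  constructor <;>
  · simp only [add_re, add_im, mul_re, mul_im, ofReal_re, ofReal_im, sub_re, sub_im, one_re,
      one_im, I_re, I_im]
    field_simp
    ring

lemma nevKernel_re : (nevKernel z t).re =
    ((1 + t * z.re) * (t - z.re) - t * z.im ^ 2) / ((t - z.re) ^ 2 + z.im ^ 2) := by
  rw [nevKernel_eq t hz, add_re, ofReal_re, re_ofReal_mul, I_re, mul_zero, add_zero]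

lemma nevKernel_im : (nevKernel z t).im = z.im * nevWeight z t := by
  rw [nevKernel_eq t hz, add_im, ofReal_im, im_ofReal_mul, I_im, mul_one, zero_add]

lemma norm_nevKernel_sq_le : ‖nevKernel z t‖ ^ 2 ≤ (1 + ‖z‖ ^ 2) * nevWeight z t := by
  rw [nevKernel, nevWeight, norm_div, div_pow, Complex.sq_norm, Complex.sq_norm, Complex.sq_norm,
    normSq_ofReal_sub, mul_div_assoc', div_le_div_iff_of_pos_right (by positivity)]
  simp only [normSq_apply, add_re, one_re, mul_re, ofReal_re, ofReal_im, zero_mul, sub_zero,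
    add_im, one_im, mul_im, zero_add]
  nlinarith [sq_nonneg (t - z.re), sq_nonneg (t * z.re - 1), sq_nonneg t, sq_nonneg z.im]

lemma abs_nevKernel_re_add_neg_le :
    |(nevKernel z t).re + (nevKernel z (-t)).re| ≤
      |z.re| * (nevWeight z t + nevWeight z (-t)) := by
  have hD₁ : 0 < (t - z.re) ^ 2 + z.im ^ 2 := by positivity
  have hD₂ : 0 < (-t - z.re) ^ 2 + z.im ^ 2 := by positivity
  have hre : (nevKernel z t).re + (nevKernel z (-t)).re
      = 2 * z.re * (1 + t ^ 2) * (t ^ 2 - z.re ^ 2 - z.im ^ 2) /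
        (((t - z.re) ^ 2 + z.im ^ 2) * ((-t - z.re) ^ 2 + z.im ^ 2)) := by
    rw [nevKernel_re t hz, nevKernel_re (-t) hz]; field_simp; ring
  have hw : nevWeight z t + nevWeight z (-t)
      = 2 * (1 + t ^ 2) * (t ^ 2 + z.re ^ 2 + z.im ^ 2) /
        (((t - z.re) ^ 2 + z.im ^ 2) * ((-t - z.re) ^ 2 + z.im ^ 2)) := by
    simp only [nevWeight]; field_simp; ring
  have hnum : |t ^ 2 - z.re ^ 2 - z.im ^ 2| ≤ t ^ 2 + z.re ^ 2 + z.im ^ 2 :=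
    abs_le.2 ⟨by nlinarith [sq_nonneg t], by nlinarith [sq_nonneg z.re, sq_nonneg z.im]⟩
  rw [hre, hw, abs_div, abs_of_pos (mul_pos hD₁ hD₂), mul_div_assoc',
    div_le_div_iff_of_pos_right (mul_pos hD₁ hD₂), abs_mul, abs_mul, abs_mul, abs_two,
    abs_of_pos (by positivity : 0 < 1 + t ^ 2)]
  calc 2 * |z.re| * (1 + t ^ 2) * |t ^ 2 - z.re ^ 2 - z.im ^ 2|
      ≤ 2 * |z.re| * (1 + t ^ 2) * (t ^ 2 + z.re ^ 2 + z.im ^ 2) := by gcongr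
    _ = _ := by ring

end Kernel

lemma nevMass_nonneg (μ : Measure ℝ) (z : ℂ) : 0 ≤ nevMass μ z :=
  integral_nonneg (nevWeight_nonneg z)

lemma ptwo_nonneg (μ : Measure ℝ) (z : ℂ) : 0 ≤ ptwo μ z :=
  setIntegral_nonneg measurableSet_Ioi fun t _ => by positivity

lemma fmap_eq (β : ℝ) (μ : Measure ℝ) (z : ℂ) :
    fmap β μ z = z + β + ∫ t, nevKernel z t ∂μ :=
  rfl

section Integrals

variable {z : ℂ}

lemma ptwo_eq (μ : Measure ℝ) (hz : 0 < z.im) :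
    ptwo μ z = ∫ t in Set.Ioi 0, (nevWeight z t + nevWeight z (-t)) ∂μ := by
  refine integral_congr_ae (.of_forall fun t => ?_)
  dsimp only
  have hD₁ : 0 < (t - z.re) ^ 2 + z.im ^ 2 := by positivity
  have hD₂ : 0 < (-t - z.re) ^ 2 + z.im ^ 2 := by positivity
  have hfac : ‖(t : ℂ) ^ 2 - z ^ 2‖ ^ 2 =
      ((t - z.re) ^ 2 + z.im ^ 2) * ((-t - z.re) ^ 2 + z.im ^ 2) := by
    rw [show (t : ℂ) ^ 2 - z ^ 2 = ((t : ℂ) - z) * -((-t : ℝ) - z) by push_cast; ring, norm_mul,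
      norm_neg, mul_pow, Complex.sq_norm, Complex.sq_norm, normSq_ofReal_sub, normSq_ofReal_sub]
  rw [hfac, Complex.sq_norm, normSq_apply]
  simp only [nevWeight]
  field_simp
  ring

variable {μ : Measure ℝ} [IsFiniteMeasure μ]

lemma integrable_nevWeight (hz : 0 < z.im) : Integrable (nevWeight z) μ :=
  .of_bound (continuous_nevWeight hz).aestronglyMeasurable _ <| .of_forall fun t => by
    rw [Real.norm_of_nonneg (nevWeight_nonneg z t)]; exact nevWeight_le t hz

lemma integrable_nevKernel (hz : 0 < z.im) : Integrable (nevKernel z) μ := by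
  refine .of_bound (continuous_nevKernel hz).aestronglyMeasurable
    (1 + (1 + ‖z‖ ^ 2) * (2 + 1 / z.im ^ 2 + 2 * (|z.re| / z.im) ^ 2)) (.of_forall fun t => ?_)
  have hsq := (norm_nevKernel_sq_le t hz).trans
    (mul_le_mul_of_nonneg_left (nevWeight_le t hz) (by positivity))
  nlinarith [sq_nonneg (‖nevKernel z t‖ - 1)]

lemma fmap_im (β : ℝ) (hz : 0 < z.im) : (fmap β μ z).im = z.im * (1 + nevMass μ z) := by
  have h : (∫ t, nevKernel z t ∂μ).im = ∫ t, (nevKernel z t).im ∂μ :=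
    (integral_im (integrable_nevKernel hz)).symm
  rw [fmap_eq, add_im, add_im, ofReal_im, h]
  simp only [nevKernel_im _ hz, integral_const_mul, nevMass]
  ring

lemma fmap_re (β : ℝ) (hz : 0 < z.im) :
    (fmap β μ z).re = z.re + β + ∫ t, (nevKernel z t).re ∂μ := by
  rw [fmap_eq, add_re, add_re, ofReal_re]
  exact congrArg _ (integral_re (integrable_nevKernel hz)).symm

end Integrals

section Symmetric

variable {μ : Measure ℝ} [IsFiniteMeasure μ] [μ.IsNegInvariant] {z : ℂ}

lemma isNegInvariant_of_preimage_neg {G : Type*} [MeasurableSpace G] [Neg G] [MeasurableNeg G]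
    {ν : Measure G} (hsym : ∀ A : Set G, MeasurableSet A → ν A = ν ((fun t => -t) ⁻¹' A)) :
    ν.IsNegInvariant :=
  ⟨Measure.ext fun A hA => by rw [Measure.neg, Measure.map_apply measurable_neg hA, ← hsym A hA]⟩

lemma ptwo_le_nevMass (hz : 0 < z.im) : ptwo μ z ≤ nevMass μ z := by
  have hw := integrable_nevWeight (μ := μ) hz
  have hneg : ∫ t in Set.Ioi 0, nevWeight z (-t) ∂μ = ∫ t in Set.Iio 0, nevWeight z t ∂μ := by
    rw [← (Measure.measurePreserving_neg μ).setIntegral_preimage_emb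
      (Homeomorph.neg ℝ).measurableEmbedding]
    congr 1 <;> ext <;> simp
  rw [ptwo_eq μ hz, integral_add hw.integrableOn hw.comp_neg.integrableOn, hneg,
    ← setIntegral_union (s := Set.Ioi 0) (t := Set.Iio 0)
      (Set.disjoint_left.2 fun _ ht ht' => lt_asymm ht ht') measurableSet_Iio
      hw.integrableOn hw.integrableOn]
  exact setIntegral_le_integral hw (.of_forall (nevWeight_nonneg z))

lemma abs_fmap_re_le (β : ℝ) (hz : 0 < z.im) :
    |(fmap β μ z).re| ≤ |z.re| * (1 + nevMass μ z) + |β| := by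
  have hk : Integrable (fun t => (nevKernel z t).re) μ := (integrable_nevKernel hz).re
  have hw := integrable_nevWeight (μ := μ) hz
  have hk' : Integrable (fun t => (nevKernel z t).re + (nevKernel z (-t)).re) μ :=
    hk.add hk.comp_neg
  have hw' : Integrable (fun t => |z.re| * (nevWeight z t + nevWeight z (-t))) μ :=
    (hw.add hw.comp_neg).const_mul |z.re|
  have hsum : 2 * ∫ t, (nevKernel z t).re ∂μ
      = ∫ t, ((nevKernel z t).re + (nevKernel z (-t)).re) ∂μ := by
    rw [integral_add hk hk.comp_neg, integral_neg_eq_self (fun t => (nevKernel z t).re)]; ring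
  have hbound : |∫ t, (nevKernel z t).re ∂μ| ≤ |z.re| * nevMass μ z := by
    have := abs_integral_le_integral_abs.trans <|
      integral_mono hk'.abs hw' (abs_nevKernel_re_add_neg_le · hz)
    rw [← hsum, integral_const_mul, integral_add hw hw.comp_neg,
      integral_neg_eq_self (nevWeight z), abs_mul, abs_two] at this
    rw [nevMass]; linarith
  rw [fmap_re β hz]
  calc |z.re + β + ∫ t, (nevKernel z t).re ∂μ|
      ≤ |z.re| + |β| + |∫ t, (nevKernel z t).re ∂μ| := abs_add_three _ _ _
    _ ≤ |z.re| * (1 + nevMass μ z) + |β| := by linarith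

end Symmetric

lemma tendsto_ptwo_zero (μ : Measure ℝ) [IsFiniteMeasure μ] {z : ℕ → ℂ} {M : ℝ}
    (hz : ∀ n, 0 < (z n).im) (hM : ∀ n, |(z n).re| / (z n).im ≤ M)
    (him : Tendsto (fun n => (z n).im) atTop atTop) :
    Tendsto (fun n => ptwo μ (z n)) atTop (𝓝 0) := by
  have hbound : ∀ᶠ n in atTop, ∀ t, nevWeight (z n) t ≤ 3 + 2 * M ^ 2 := by
    filter_upwards [him.eventually_ge_atTop 1] with n hn t
    have h₁ : 1 / (z n).im ^ 2 ≤ 1 := by rw [div_le_one (by positivity)]; nlinarith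
    have h₂ : (|(z n).re| / (z n).im) ^ 2 ≤ M ^ 2 :=
      pow_le_pow_left₀ (div_nonneg (abs_nonneg _) (hz n).le) (hM n) 2
    linarith [nevWeight_le t (hz n)]
  have hlim (t : ℝ) : Tendsto (fun n => nevWeight (z n) t) atTop (𝓝 0) :=
    squeeze_zero (fun n => nevWeight_nonneg _ t) (fun n => nevWeight_le_div_sq t (hz n))
      (tendsto_const_nhds.div_atTop ((tendsto_pow_atTop two_ne_zero).comp him))
  simp_rw [ptwo_eq μ (hz _)]
  have hdom : ∀ᶠ n in atTop, ∀ᵐ t ∂μ.restrict (Set.Ioi 0),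
      ‖nevWeight (z n) t + nevWeight (z n) (-t)‖ ≤ 2 * (3 + 2 * M ^ 2) :=
    hbound.mono fun n hn => .of_forall fun t => by
      rw [Real.norm_of_nonneg (add_nonneg (nevWeight_nonneg _ _) (nevWeight_nonneg _ _))]
      linarith [hn t, hn (-t)]
  simpa only [integral_zero] using tendsto_integral_filter_of_dominated_convergence
    (F := fun n t => nevWeight (z n) t + nevWeight (z n) (-t)) (f := fun _ => 0) _
    (.of_forall fun n => ((continuous_nevWeight (hz n)).add
      ((continuous_nevWeight (hz n)).comp continuous_neg)).aestronglyMeasurable)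
    hdom (integrable_const _) (.of_forall fun t => by simpa using (hlim t).add (hlim (-t)))

lemma le_mul_exp_of_le_add_div {y P r : ℕ → ℝ} {b ε : ℝ} (hy : ∀ n, 0 < y n)
    (hP : ∀ n, 0 ≤ P n) (hb : 0 ≤ b) (hε : 0 < ε) (hyrec : ∀ n, y (n + 1) = y n * (1 + P n))
    (hrrec : ∀ n, r (n + 1) ≤ r n + b / y (n + 1)) (hlow : ∀ n, ε ≤ r n * P n) (n : ℕ) :
    r n ≤ r 0 * Real.exp (b / ε / y 0) := by
  have hr (n : ℕ) : 0 ≤ r n := by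
    by_contra! h
    linarith [mul_nonpos_of_nonpos_of_nonneg h.le (hP n), hlow n]
  set K := b / ε
  have hK : 0 ≤ K := div_nonneg hb hε.le
  have hstep (n : ℕ) : r (n + 1) * Real.exp (K / y (n + 1)) ≤ r n * Real.exp (K / y n) := by
    have hy₁ := hy (n + 1)
    have hr₀ := hr n
    have hgap : 1 / y n - 1 / y (n + 1) = P n / y (n + 1) := by
      have : 1 + P n ≠ 0 := by linarith [hP n]
      rw [hyrec]; field_simp [(hy n).ne']; ring
    have hb' : b / y (n + 1) ≤ r n * (K * (1 / y n - 1 / y (n + 1))) :=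
      calc b / y (n + 1) = K / y (n + 1) * ε := by simp only [K]; field_simp
        _ ≤ K / y (n + 1) * (r n * P n) := by gcongr; exact hlow n
        _ = r n * (K * (1 / y n - 1 / y (n + 1))) := by rw [hgap]; ring
    calc r (n + 1) * Real.exp (K / y (n + 1))
        ≤ r n * (1 + K * (1 / y n - 1 / y (n + 1))) * Real.exp (K / y (n + 1)) := by
          gcongr; linarith [hrrec n]
      _ ≤ r n * Real.exp (K * (1 / y n - 1 / y (n + 1))) * Real.exp (K / y (n + 1)) := by
          gcongr; linarith [Real.add_one_le_exp (K * (1 / y n - 1 / y (n + 1)))]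
      _ = r n * Real.exp (K / y n) := by rw [mul_assoc, ← Real.exp_add]; ring_nf
  calc r n ≤ r n * Real.exp (K / y n) :=
        le_mul_of_one_le_right (hr n) (Real.one_le_exp (div_nonneg hK (hy n).le))
    _ ≤ r 0 * Real.exp (K / y 0) :=
        antitone_nat_of_succ_le (f := fun n => r n * Real.exp (K / y n)) hstep (Nat.zero_le n)

lemma tendsto_atTop_of_mul_one_add {y P : ℕ → ℝ} {c : ℝ} (hy : 0 < y 0) (hc : 0 < c)
    (hP : ∀ n, c ≤ P n) (hyrec : ∀ n, y (n + 1) = y n * (1 + P n)) : Tendsto y atTop atTop := by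
  refine tendsto_atTop_of_geom_le hy (lt_add_of_pos_right 1 hc) fun n => ?_
  have hpos : ∀ n, 0 < y n := fun n => by
    induction n with
    | zero => exact hy
    | succ n ih => rw [hyrec]; nlinarith [hP n]
  rw [hyrec, mul_comm]
  exact mul_le_mul_of_nonneg_left (by linarith [hP n]) (hpos n).le

lemma liminf_eq_zero_of_frequently_lt {ι : Type*} {l : Filter ι} {a : ι → ℝ}
    (h₀ : ∀ i, 0 ≤ a i) (h : ∀ ε > 0, ∃ᶠ i in l, a i < ε) : liminf a l = 0 := by
  refine le_antisymm (le_of_forall_pos_le_add fun ε hε => ?_) ?_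
  · rw [zero_add]
    exact liminf_le_of_frequently_le ((h ε hε).mono fun _ => le_of_lt) (isBoundedUnder_of ⟨0, h₀⟩)
  · exact le_liminf_of_le
      (IsCoboundedUnder.of_frequently_le ((h 1 one_pos).mono fun _ => le_of_lt)) (.of_forall h₀)

section Orbit

variable (μ : Measure ℝ) [IsFiniteMeasure μ] (β : ℝ) {w : ℂ}

lemma im_iterate_fmap_pos (hw : 0 < w.im) (n : ℕ) : 0 < ((fmap β μ)^[n] w).im := by
  induction n with
  | zero => exact hw
  | succ n ih =>
    rw [Function.iterate_succ_apply', fmap_im β ih]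
    exact mul_pos ih (by linarith [nevMass_nonneg μ ((fmap β μ)^[n] w)])

lemma exists_ratio_mul_ptwo_iterate_lt [μ.IsNegInvariant] (hw : 0 < w.im) {ε : ℝ} (hε : 0 < ε) :
    ∃ n, |((fmap β μ)^[n] w).re| / ((fmap β μ)^[n] w).im * ptwo μ ((fmap β μ)^[n] w) < ε := by
  set z : ℕ → ℂ := fun n => (fmap β μ)^[n] w
  have hz := im_iterate_fmap_pos μ β hw
  have hzsucc (n : ℕ) : z (n + 1) = fmap β μ (z n) := Function.iterate_succ_apply' _ _ _
  have hP (n : ℕ) := nevMass_nonneg μ (z n)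
  have hyrec (n : ℕ) : (z (n + 1)).im = (z n).im * (1 + nevMass μ (z n)) := by
    rw [hzsucc, fmap_im β (hz n)]
  have hrrec (n : ℕ) : |(z (n + 1)).re| / (z (n + 1)).im
      ≤ |(z n).re| / (z n).im + |β| / (z (n + 1)).im := by
    have hy₁ := hz (n + 1)
    calc |(z (n + 1)).re| / (z (n + 1)).im
        ≤ (|(z n).re| * (1 + nevMass μ (z n)) + |β|) / (z (n + 1)).im := by
          gcongr; rw [hzsucc]; exact abs_fmap_re_le β (hz n)
      _ = _ := by rw [add_div, hyrec, mul_div_mul_right _ _ (by linarith [hP n])]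
  by_contra! hge
  have hlow (n : ℕ) : ε ≤ |(z n).re| / (z n).im * nevMass μ (z n) :=
    (hge n).trans (mul_le_mul_of_nonneg_left (ptwo_le_nevMass (hz n))
      (div_nonneg (abs_nonneg _) (hz n).le))
  set M := |(z 0).re| / (z 0).im * Real.exp (|β| / ε / (z 0).im)
  have hM := le_mul_exp_of_le_add_div hz hP (abs_nonneg β) hε hyrec hrrec hlow
  have hMpos : 0 < M := by
    by_contra! h
    nlinarith [hlow 0, hM 0, hP 0]
  have hytop : Tendsto (fun n => (z n).im) atTop atTop :=
    tendsto_atTop_of_mul_one_add (hz 0) (div_pos hε hMpos) (fun n => by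
      rw [div_le_iff₀ hMpos]; nlinarith [hlow n, hM n, hP n]) hyrec
  obtain ⟨n, hn⟩ := (((tendsto_ptwo_zero μ hz hM hytop).const_mul M).eventually
    (gt_mem_nhds (by simpa using hε))).exists
  linarith [hge n, mul_le_mul_of_nonneg_right (hM n) (ptwo_nonneg μ (z n))]

end Orbit

theorem stmt_14_general (β : ℝ) (μ : Measure ℝ) [IsFiniteMeasure μ]
    (hsym : ∀ A : Set ℝ, MeasurableSet A → μ A = μ ((fun t : ℝ => -t) ⁻¹' A)) :
    ∀ z₀ : ℂ, 0 < z₀.im →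
      Filter.liminf
        (fun n : ℕ =>
          (|((fmap β μ)^[n] z₀).re| / ((fmap β μ)^[n] z₀).im) *
            ptwo μ ((fmap β μ)^[n] z₀))
        atTop = 0 := by
  intro z₀ hz₀
  have := isNegInvariant_of_preimage_neg hsym
  refine liminf_eq_zero_of_frequently_lt
    (fun n => mul_nonneg (div_nonneg (abs_nonneg _) (im_iterate_fmap_pos μ β hz₀ n).le)
      (ptwo_nonneg μ _))
    fun ε hε => frequently_atTop.2 fun N => ?_
  obtain ⟨n, hn⟩ := exists_ratio_mul_ptwo_iterate_lt μ β (im_iterate_fmap_pos μ β hz₀ N) hε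
  exact ⟨n + N, Nat.le_add_left N n, by rwa [Function.iterate_add_apply]⟩

theorem stmt_14 (β : ℝ) (μ : Measure ℝ) [IsFiniteMeasure μ]
    (hsym : ∀ A : Set ℝ, MeasurableSet A → μ A = μ ((fun t : ℝ => -t) ⁻¹' A))
    (hμ : ¬ Integrable (fun t : ℝ => t) μ) (hβ : β ≠ 0) :
    ∀ z₀ : ℂ, 0 < z₀.im →
      Filter.liminf
        (fun n : ℕ =>
          (|((fmap β μ)^[n] z₀).re| / ((fmap β μ)^[n] z₀).im) *
            ptwo μ ((fmap β μ)^[n] z₀))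
        atTop = 0 :=
  stmt_14_general β μ hsym
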